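/- Suppose each f_i is L-smooth and convex, client i performs τ_i ≥ 1 local FedLin steps per round with step size η_i = 1/(10Lτ_i), and there is no compression. Then f((1/T)∑_{t=1}^T x̄_t) - f(x*) ≤ (10L/T)(‖x̄₁ - x*‖² - ‖x̄_{T+1} - x*‖²), where x* is a minimizer of f = (1/m)∑f_i. -/

import Mathlib

/-!
Write `η̄ = ηᵢτᵢ = 1/(10L)` and `G = ∇f(x̄)` at the start `x̄` of a round. The correction
`∇f(x̄) - ∇fᵢ(x̄)` makes every local direction equal to `G` up to `L` times the drift, so each
client stays within `3η̄‖G‖` of `x̄` and the averaged displacement `e = x̄ - x̄⁺` has norm at most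
`(13/10)η̄‖G‖`. Smoothness and convexity of `fᵢ` at the local iterates give
`⟪e, x̄ - x*⟫ ≥ η̄(f(x̄) - f(x*) - (9/2)Lη̄²‖G‖²)`, and `‖G‖² ≤ 2L(f(x̄) - f(x*))` because `x*`
minimises `f`. Expanding `‖x̄⁺ - x*‖² = ‖x̄ - x* - e‖²` then yields
`f(x̄_t) - f(x*) ≤ 10L(‖x̄_t - x*‖² - ‖x̄_{t+1} - x*‖²)`; this telescopes over the rounds, and
Jensen's inequality passes to the averaged iterate.
-/

open Finset
open scoped RealInnerProductSpace NNReal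

section SmoothConvex

variable {E : Type*} [NormedAddCommGroup E] [InnerProductSpace ℝ E] [CompleteSpace E]
  {g : E → ℝ} {K : ℝ≥0}

theorem hasDerivAt_comp_add_smul {x v : E} {s : ℝ} (hg : DifferentiableAt ℝ g (x + s • v)) :
    HasDerivAt (fun r : ℝ => g (x + r • v)) ⟪gradient g (x + s • v), v⟫ s := by
  have hline : HasDerivAt (fun r : ℝ => x + r • v) v s := by
    simpa using ((hasDerivAt_id s).smul_const v).const_add x
  simpa [Function.comp_def] using hg.hasGradientAt.hasFDerivAt.comp_hasDerivAt s hline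

theorem ConvexOn.add_inner_gradient_le (hc : ConvexOn ℝ Set.univ g) {x : E}
    (hg : DifferentiableAt ℝ g x) (y : E) : g x + ⟪gradient g x, y - x⟫ ≤ g y := by
  have hline : ConvexOn ℝ Set.univ fun r : ℝ => g (x + r • (y - x)) := by
    simpa [Function.comp_def, AffineMap.lineMap_apply, add_comm]
      using hc.comp_affineMap (AffineMap.lineMap x y)
  have hderiv := hasDerivAt_comp_add_smul (v := y - x) (s := 0) (by simpa using hg)
  have hslope := hline.le_slope_of_hasDerivAt (Set.mem_univ 0) (Set.mem_univ 1) one_pos hderiv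
  simp only [zero_smul, add_zero, slope_def_field, one_smul, add_sub_cancel] at hslope
  linarith

theorem le_add_inner_gradient_add_sq (hg : Differentiable ℝ g)
    (hK : LipschitzWith K (gradient g)) (x y : E) :
    g y ≤ g x + ⟪gradient g x, y - x⟫ + K / 2 * ‖y - x‖ ^ 2 := by
  set v := y - x
  set ψ : ℝ → ℝ := fun r => g (x + r • v) - r * ⟪gradient g x, v⟫ - K / 2 * r ^ 2 * ‖v‖ ^ 2
  have hψ : ∀ r,
      HasDerivAt ψ (⟪gradient g (x + r • v) - gradient g x, v⟫ - K * r * ‖v‖ ^ 2) r := by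
    intro r
    have hderiv := ((hasDerivAt_comp_add_smul (x := x) (v := v) (hg _)).sub
      ((hasDerivAt_id r).mul_const ⟪gradient g x, v⟫)).sub
      (((hasDerivAt_pow 2 r).const_mul (K / 2 : ℝ)).mul_const (‖v‖ ^ 2))
    exact hderiv.congr_deriv (by simp only [inner_sub_left, one_mul]; ring)
  have hψ' : ∀ r ∈ interior (Set.Ici (0 : ℝ)),
      ⟪gradient g (x + r • v) - gradient g x, v⟫ - K * r * ‖v‖ ^ 2 ≤ 0 := by
    intro r hr
    rw [interior_Ici, Set.mem_Ioi] at hr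
    have hlip := hK.dist_le_mul (x + r • v) x
    rw [dist_eq_norm, dist_eq_norm, add_sub_cancel_left, norm_smul, Real.norm_of_nonneg hr.le]
      at hlip
    linarith [real_inner_le_norm (gradient g (x + r • v) - gradient g x) v,
      mul_le_mul_of_nonneg_right hlip (norm_nonneg v)]
  have hanti := antitoneOn_of_hasDerivWithinAt_nonpos (convex_Ici 0)
    (fun r _ => (hψ r).continuousAt.continuousWithinAt) (fun r _ => (hψ r).hasDerivWithinAt) hψ'
  have hψ10 := hanti Set.self_mem_Ici (Set.mem_Ici.2 zero_le_one) zero_le_one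
  simp only [ψ, one_smul, zero_smul, add_zero, v, add_sub_cancel] at hψ10
  linarith

theorem norm_gradient_sq_le_of_forall_le (hg : Differentiable ℝ g)
    (hK : LipschitzWith K (gradient g)) (hK0 : 0 < K) {xstar : E} (hmin : ∀ z, g xstar ≤ g z)
    (z : E) :
    ‖gradient g z‖ ^ 2 ≤ 2 * K * (g z - g xstar) := by
  have hK0' : (0 : ℝ) < K := hK0
  -- one gradient step of length `1 / K` from `z` decreases `g` by at least `‖∇g z‖² / (2K)`
  have hstep := le_add_inner_gradient_add_sq hg hK z (z - (1 / (K : ℝ)) • gradient g z)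
  rw [sub_sub_cancel_left, inner_neg_right, real_inner_smul_right, real_inner_self_eq_norm_sq,
    norm_neg, norm_smul, Real.norm_of_nonneg (by positivity)] at hstep
  have hdecrease : ‖gradient g z‖ ^ 2 / (2 * K) ≤ g z - g xstar := by
    have hvalue : g z + -(1 / (K : ℝ) * ‖gradient g z‖ ^ 2)
        + K / 2 * (1 / (K : ℝ) * ‖gradient g z‖) ^ 2 = g z - ‖gradient g z‖ ^ 2 / (2 * K) := by
      field_simp
      ring
    linarith [hmin (z - (1 / (K : ℝ)) • gradient g z)]
  rwa [div_le_iff₀ (by positivity), mul_comm] at hdecrease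

theorem sub_sub_sq_le_inner_gradient (hc : ConvexOn ℝ Set.univ g) (hg : Differentiable ℝ g)
    (hK : LipschitzWith K (gradient g)) (b y xstar : E) :
    g b - g xstar - K / 2 * ‖b - y‖ ^ 2 ≤ ⟪gradient g y, b - xstar⟫ := by
  have hupper := le_add_inner_gradient_add_sq hg hK y b
  have hlower := hc.add_inner_gradient_le (hg y) xstar
  have hsplit :
      ⟪gradient g y, b - xstar⟫ = ⟪gradient g y, b - y⟫ - ⟪gradient g y, xstar - y⟫ := by
    rw [← inner_sub_right, sub_sub_sub_cancel_right]
  linarith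

end SmoothConvex

section Average

variable {E : Type*} [NormedAddCommGroup E] {ι : Type*} {f : ι → E → ℝ} {m : ℕ}

theorem hasGradientAt_const_mul_sum [InnerProductSpace ℝ E] [CompleteSpace E] (s : Finset ι)
    (c : ℝ) {x : E} (hf : ∀ i ∈ s, DifferentiableAt ℝ (f i) x) :
    HasGradientAt (fun z => c * ∑ i ∈ s, f i z) (c • ∑ i ∈ s, gradient (f i) x) x := by
  rw [hasGradientAt_iff_hasFDerivAt, map_smul, map_sum]
  exact (HasFDerivAt.fun_sum fun i hi => (hf i hi).hasGradientAt.hasFDerivAt).const_mul c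

theorem convexOn_const_mul_sum [Module ℝ E] {S : Set E} (s : Finset ι) {c : ℝ} (hc : 0 ≤ c)
    (hf : ∀ i ∈ s, ConvexOn ℝ S (f i)) (hS : Convex ℝ S) :
    ConvexOn ℝ S fun z => c * ∑ i ∈ s, f i z := by
  refine ⟨hS, fun x hx y hy a b ha hb hab => ?_⟩
  simp only [smul_eq_mul]
  calc c * ∑ i ∈ s, f i (a • x + b • y) ≤ c * ∑ i ∈ s, (a * f i x + b * f i y) :=
        mul_le_mul_of_nonneg_left (sum_le_sum fun i hi => (hf i hi).2 hx hy ha hb hab) hc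
    _ = a * (c * ∑ i ∈ s, f i x) + b * (c * ∑ i ∈ s, f i y) := by
        rw [sum_add_distrib, ← mul_sum, ← mul_sum]
        ring

theorem lipschitzWith_average [NormedSpace ℝ E] {X : Type*} [PseudoMetricSpace X] {K : ℝ≥0}
    {φ : Fin m → X → E} (hφ : ∀ i, LipschitzWith K (φ i)) :
    LipschitzWith K fun z => (1 / (m : ℝ)) • ∑ i, φ i z := by
  refine LipschitzWith.of_dist_le_mul fun a b => ?_
  rw [dist_eq_norm, ← smul_sub, ← sum_sub_distrib, norm_smul, Real.norm_of_nonneg (by positivity)]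
  calc 1 / (m : ℝ) * ‖∑ i, (φ i a - φ i b)‖ ≤ 1 / (m : ℝ) * ∑ _i : Fin m, K * dist a b := by
        gcongr
        refine norm_sum_le_of_le _ fun i _ => ?_
        rw [← dist_eq_norm]
        exact (hφ i).dist_le_mul a b
    _ = (m / m : ℝ) * (K * dist a b) := by
        rw [sum_const, card_univ, Fintype.card_fin, nsmul_eq_mul]
        ring
    _ ≤ K * dist a b := mul_le_of_le_one_left (by positivity) (div_self_le_one (m : ℝ))

theorem norm_average_le [NormedSpace ℝ E] (hm : 0 < m) {v : Fin m → E} {M : ℝ}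
    (hv : ∀ i, ‖v i‖ ≤ M) : ‖(1 / (m : ℝ)) • ∑ i, v i‖ ≤ M := by
  have hm' : (0 : ℝ) < m := by exact_mod_cast hm
  rw [norm_smul, Real.norm_of_nonneg (by positivity), one_div_mul_eq_div, div_le_iff₀ hm']
  calc ‖∑ i, v i‖ ≤ ∑ _i : Fin m, M := norm_sum_le_of_le _ fun i _ => hv i
    _ = M * m := by rw [sum_const, card_univ, Fintype.card_fin, nsmul_eq_mul, mul_comm]

theorem average_sub_eq_sub_average [Module ℝ E] (hm : 0 < m) (b x : E) (y : Fin m → E) :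
    (1 / (m : ℝ)) • ∑ i, y i - x = (b - x) - (1 / (m : ℝ)) • ∑ i, (b - y i) := by
  have hm' : (m : ℝ) ≠ 0 := by positivity
  rw [sum_sub_distrib, smul_sub, sum_const, card_univ, Fintype.card_fin,
    ← Nat.cast_smul_eq_nsmul ℝ, smul_smul, one_div_mul_cancel hm', one_smul]
  abel

theorem average_add_inner_average_sub [InnerProductSpace ℝ E] (hm : 0 < m) (a : Fin m → ℝ)
    (w : Fin m → E) (p : E) :
    1 / (m : ℝ) * ∑ i, (a i + ⟪(1 / (m : ℝ)) • ∑ j, w j - w i, p⟫) = 1 / (m : ℝ) * ∑ i, a i := by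
  have hm' : (m : ℝ) ≠ 0 := by positivity
  rw [sum_add_distrib, ← sum_inner, sum_sub_distrib, sum_const, card_univ, Fintype.card_fin,
    ← Nat.cast_smul_eq_nsmul ℝ, smul_smul, mul_one_div_cancel hm', one_smul, sub_self,
    inner_zero_left, add_zero]

end Average

theorem ConvexOn.average_sub_le_of_descent {E : Type*} [AddCommGroup E] [Module ℝ E]
    {F : E → ℝ} (hF : ConvexOn ℝ Set.univ F) {z : ℕ → E} {a : ℕ → ℝ} {c Fstar : ℝ} {T : ℕ}
    (hT : 1 ≤ T) (hdesc : ∀ t ∈ Icc 1 T, F (z t) - Fstar ≤ c * (a t - a (t + 1))) :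
    F ((1 / (T : ℝ)) • ∑ t ∈ Icc 1 T, z t) - Fstar ≤ c / T * (a 1 - a (T + 1)) := by
  have hT' : (0 : ℝ) < T := by exact_mod_cast hT
  have hcard : ((Icc 1 T).card : ℝ) = T := by simp
  have hjensen :
      F ((1 / (T : ℝ)) • ∑ t ∈ Icc 1 T, z t) ≤ ∑ t ∈ Icc 1 T, (1 / (T : ℝ)) • F (z t) := by
    rw [smul_sum]
    refine hF.map_sum_le (fun _ _ => by positivity) ?_ fun _ _ => Set.mem_univ _
    rw [sum_const, nsmul_eq_mul, hcard]
    field_simp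
  have htelescope : ∑ t ∈ Icc 1 T, (a t - a (t + 1)) = a 1 - a (T + 1) := by
    rw [← neg_sub, ← sum_Icc_sub hT, ← sum_neg_distrib]
    simp only [neg_sub]
  calc F ((1 / (T : ℝ)) • ∑ t ∈ Icc 1 T, z t) - Fstar
      ≤ 1 / T * ∑ t ∈ Icc 1 T, (F (z t) - Fstar) := by
        simp only [smul_eq_mul, ← mul_sum] at hjensen
        rw [sum_sub_distrib, sum_const, nsmul_eq_mul, hcard, mul_sub, ← mul_assoc,
          one_div_mul_cancel hT'.ne', one_mul]
        linarith
    _ ≤ 1 / T * ∑ t ∈ Icc 1 T, c * (a t - a (t + 1)) := by gcongr with t ht; exact hdesc t ht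
    _ = c / T * (a 1 - a (T + 1)) := by rw [← mul_sum, htelescope]; ring

section CorrectedGradientRun

theorem sub_eq_smul_sum_of_forall_eq_sub_smul {E : Type*} [AddCommGroup E] [Module ℝ E]
    {y u : ℕ → E} {η : ℝ} {τ : ℕ} (hy : ∀ ℓ < τ, y (ℓ + 1) = y ℓ - η • u ℓ) :
    y 0 - y τ = η • ∑ ℓ ∈ range τ, u ℓ := by
  rw [← sum_range_sub', smul_sum]
  refine sum_congr rfl fun ℓ hℓ => ?_
  rw [hy ℓ (mem_range.1 hℓ), sub_sub_cancel]

variable {E : Type*} [NormedAddCommGroup E] [InnerProductSpace ℝ E] [CompleteSpace E]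

theorem norm_gradient_sub_gradient_add_le {g : E → ℝ} {K : ℝ≥0}
    (hK : LipschitzWith K (gradient g)) (b c z : E) :
    ‖gradient g z - gradient g b + c‖ ≤ K * ‖z - b‖ + ‖c‖ := by
  refine (norm_add_le _ _).trans (add_le_add_left ?_ _)
  simpa only [dist_eq_norm] using hK.dist_le_mul z b

/-- FedLin's local update, `c` being the gradient of the global objective at the start `b`. -/
def IsCorrectedGradientRun (g : E → ℝ) (b c : E) (η : ℝ) (τ : ℕ) (y : ℕ → E) : Prop :=
  y 0 = b ∧ ∀ ℓ < τ, y (ℓ + 1) = y ℓ - η • (gradient g (y ℓ) - gradient g b + c)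

namespace IsCorrectedGradientRun

variable {g : E → ℝ} {K : ℝ≥0} {b c : E} {η : ℝ} {τ : ℕ} {y : ℕ → E}

theorem start_sub_end (hy : IsCorrectedGradientRun g b c η τ y) :
    b - y τ = η • ∑ ℓ ∈ range τ, (gradient g (y ℓ) - gradient g b + c) := by
  have hsum := sub_eq_smul_sum_of_forall_eq_sub_smul hy.2
  rwa [hy.1] at hsum

theorem norm_sub_start_le (hy : IsCorrectedGradientRun g b c η τ y)
    (hK : LipschitzWith K (gradient g)) (hη : 0 ≤ η) (hητ : η * τ * K ≤ 1 / 10) :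
    ∀ ℓ ≤ τ, ‖y ℓ - b‖ ≤ 3 * (η * ℓ) * ‖c‖ := by
  intro ℓ
  induction ℓ with
  | zero => simp [hy.1]
  | succ ℓ ih =>
    intro hℓ
    have hdrift := ih (by omega)
    have hstep : ‖y (ℓ + 1) - b‖ ≤ ‖y ℓ - b‖ + η * (K * ‖y ℓ - b‖ + ‖c‖) := by
      rw [hy.2 ℓ (by omega), sub_right_comm]
      refine (norm_sub_le _ _).trans ?_
      rw [norm_smul, Real.norm_of_nonneg hη]
      gcongr
      exact norm_gradient_sub_gradient_add_le hK b c _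
    have hℓτ : η * ℓ * K ≤ 1 / 10 :=
      le_trans (by gcongr; exact_mod_cast Nat.le_of_succ_le hℓ) hητ
    -- the step has length at most `η (K ‖y ℓ - b‖ + ‖c‖) ≤ η (3/10 + 1) ‖c‖`
    push_cast
    linarith [mul_le_mul_of_nonneg_left hdrift (mul_nonneg hη K.coe_nonneg),
      mul_nonneg hη (norm_nonneg c),
      mul_le_mul_of_nonneg_right hℓτ (by positivity : 0 ≤ 3 * η * ‖c‖)]

theorem norm_start_sub_end_le (hy : IsCorrectedGradientRun g b c η τ y)
    (hK : LipschitzWith K (gradient g)) (hη : 0 ≤ η) (hητ : η * τ * K ≤ 1 / 10) :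
    ‖b - y τ‖ ≤ 13 / 10 * (η * τ) * ‖c‖ := by
  have hdir : ∀ ℓ ∈ range τ, ‖gradient g (y ℓ) - gradient g b + c‖ ≤ 13 / 10 * ‖c‖ := by
    intro ℓ hℓ
    have hℓτ : ℓ ≤ τ := (mem_range.1 hℓ).le
    have hdrift := hy.norm_sub_start_le hK hη hητ ℓ hℓτ
    have hηℓ : η * ℓ * K ≤ 1 / 10 := le_trans (by gcongr) hητ
    calc ‖gradient g (y ℓ) - gradient g b + c‖ ≤ K * ‖y ℓ - b‖ + ‖c‖ :=
          norm_gradient_sub_gradient_add_le hK b c _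
      _ ≤ 13 / 10 * ‖c‖ := by
          linarith [mul_le_mul_of_nonneg_left hdrift K.coe_nonneg,
            mul_le_mul_of_nonneg_right hηℓ (by positivity : 0 ≤ 3 * ‖c‖)]
  rw [hy.start_sub_end, norm_smul, Real.norm_of_nonneg hη]
  calc η * ‖∑ ℓ ∈ range τ, (gradient g (y ℓ) - gradient g b + c)‖
      ≤ η * ∑ _ℓ ∈ range τ, 13 / 10 * ‖c‖ := by
        gcongr
        exact norm_sum_le_of_le _ hdir
    _ = 13 / 10 * (η * τ) * ‖c‖ := by
        rw [sum_const, card_range, nsmul_eq_mul]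
        ring

theorem mul_le_inner_start_sub_end (hy : IsCorrectedGradientRun g b c η τ y)
    (hconv : ConvexOn ℝ Set.univ g) (hg : Differentiable ℝ g) (hK : LipschitzWith K (gradient g))
    (hη : 0 ≤ η) (hητ : η * τ * K ≤ 1 / 10) (xstar : E) :
    η * τ * (g b - g xstar - K / 2 * (3 * (η * τ) * ‖c‖) ^ 2 + ⟪c - gradient g b, b - xstar⟫)
      ≤ ⟪b - y τ, b - xstar⟫ := by
  set C := g b - g xstar - K / 2 * (3 * (η * τ) * ‖c‖) ^ 2 + ⟪c - gradient g b, b - xstar⟫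
    with hC
  have hdir : ∀ ℓ ∈ range τ, C ≤ ⟪gradient g (y ℓ) - gradient g b + c, b - xstar⟫ := by
    intro ℓ hℓ
    have hℓτ : ℓ ≤ τ := (mem_range.1 hℓ).le
    have hdrift : ‖b - y ℓ‖ ≤ 3 * (η * τ) * ‖c‖ := by
      rw [norm_sub_rev]
      refine (hy.norm_sub_start_le hK hη hητ ℓ hℓτ).trans ?_
      gcongr
    have hgrad := sub_sub_sq_le_inner_gradient hconv hg hK b (y ℓ) xstar
    have hsq : K / 2 * ‖b - y ℓ‖ ^ 2 ≤ K / 2 * (3 * (η * τ) * ‖c‖) ^ 2 := by gcongr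
    rw [sub_add_eq_add_sub, add_sub_assoc, inner_add_left]
    linarith
  rw [hy.start_sub_end, real_inner_smul_left, sum_inner, mul_assoc]
  gcongr
  calc τ * C = ∑ _ℓ ∈ range τ, C := by rw [sum_const, card_range, nsmul_eq_mul]
    _ ≤ _ := sum_le_sum hdir

end IsCorrectedGradientRun

end CorrectedGradientRun

theorem le_mul_norm_sq_sub_norm_sub_sq {E : Type*} [NormedAddCommGroup E]
    [InnerProductSpace ℝ E] {p e : E} {Δ γ K s : ℝ} (hK : 0 < K) (hKs : K * s = 1 / 10)
    (hΔ : 0 ≤ Δ) (hγ : γ ^ 2 ≤ 2 * K * Δ) (he : ‖e‖ ≤ 13 / 10 * s * γ)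
    (hep : s * (Δ - K / 2 * (3 * s * γ) ^ 2) ≤ ⟪e, p⟫) :
    Δ ≤ 10 * K * (‖p‖ ^ 2 - ‖p - e‖ ^ 2) := by
  have hs : 0 < s := pos_of_mul_pos_right (hKs ▸ by norm_num) hK.le
  have he_sq : ‖e‖ ^ 2 ≤ (13 / 10 * s * γ) ^ 2 := pow_le_pow_left₀ (norm_nonneg e) he 2
  have hKsΔ : K * s * Δ = Δ / 10 := by rw [hKs]; ring
  have hKsγ : K * s ^ 2 * γ ^ 2 = s * γ ^ 2 / 10 := by rw [sq s, ← mul_assoc, hKs]; ring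
  have hK2sγ : K ^ 2 * s ^ 3 * γ ^ 2 = s * γ ^ 2 / 100 := by
    rw [show K ^ 2 * s ^ 3 * γ ^ 2 = (K * s) ^ 2 * (s * γ ^ 2) by ring, hKs]; ring
  rw [norm_sub_sq_real, real_inner_comm]
  linarith [mul_le_mul_of_nonneg_left hep (by positivity : (0 : ℝ) ≤ 20 * K),
    mul_le_mul_of_nonneg_left he_sq (by positivity : (0 : ℝ) ≤ 10 * K),
    mul_le_mul_of_nonneg_left hγ hs.le]

theorem fedlin_round_descent {E : Type*} [NormedAddCommGroup E] [InnerProductSpace ℝ E]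
    [CompleteSpace E] {m : ℕ} (hm : 0 < m) {f : Fin m → E → ℝ} {F : E → ℝ}
    (hF : ∀ z, F z = 1 / (m : ℝ) * ∑ i, f i z) {K : ℝ≥0} (hK : 0 < K)
    (hdiff : ∀ i, Differentiable ℝ (f i)) (hsmooth : ∀ i, LipschitzWith K (gradient (f i)))
    (hconv : ∀ i, ConvexOn ℝ Set.univ (f i)) {τ : Fin m → ℕ} {η : Fin m → ℝ}
    (hη : ∀ i, η i * τ i = 1 / (10 * K)) {xstar : E} (hmin : ∀ z, F xstar ≤ F z)
    {b : E} {y : Fin m → ℕ → E}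
    (hy : ∀ i, IsCorrectedGradientRun (f i) b (gradient F b) (η i) (τ i) (y i)) :
    F b - F xstar
      ≤ 10 * K * (‖b - xstar‖ ^ 2 - ‖(1 / (m : ℝ)) • ∑ i, y i (τ i) - xstar‖ ^ 2) := by
  have hFgrad : ∀ z, HasGradientAt F ((1 / (m : ℝ)) • ∑ i, gradient (f i) z) z := fun z =>
    funext hF ▸ hasGradientAt_const_mul_sum univ _ fun i _ => hdiff i z
  have hFdiff : Differentiable ℝ F := fun z => (hFgrad z).differentiableAt
  have hFsmooth : LipschitzWith K (gradient F) := by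
    rw [gradient_eq hFgrad]
    exact lipschitzWith_average hsmooth
  set s : ℝ := 1 / (10 * K) with hs
  have hKs : K * s = 1 / 10 := by
    rw [hs]
    field_simp
  set G := gradient F b with hG
  set Q := K / 2 * (3 * s * ‖G‖) ^ 2
  have hη0 : ∀ i, 0 ≤ η i := fun i =>
    (pos_of_mul_pos_left (by rw [hη i]; positivity) (Nat.cast_nonneg (τ i))).le
  have hητ : ∀ i, η i * τ i * K ≤ 1 / 10 := fun i => by rw [hη i, mul_comm, hKs]
  have hnorm : ‖(1 / (m : ℝ)) • ∑ i, (b - y i (τ i))‖ ≤ 13 / 10 * s * ‖G‖ :=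
    norm_average_le hm fun i => hη i ▸ (hy i).norm_start_sub_end_le (hsmooth i) (hη0 i) (hητ i)
  have hmean := average_add_inner_average_sub hm (fun i => f i b - f i xstar - Q)
    (fun i => gradient (f i) b) (b - xstar)
  rw [← (hFgrad b).gradient, ← hG] at hmean
  have hinner : s * (F b - F xstar - Q) ≤ ⟪(1 / (m : ℝ)) • ∑ i, (b - y i (τ i)), b - xstar⟫ := by
    rw [real_inner_smul_left, sum_inner]
    calc s * (F b - F xstar - Q)
        = 1 / m * ∑ i, s * (f i b - f i xstar - Q + ⟪G - gradient (f i) b, b - xstar⟫) := by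
          rw [← mul_sum, mul_left_comm, hmean, sum_sub_distrib, sum_sub_distrib, sum_const,
            card_univ, Fintype.card_fin, nsmul_eq_mul, hF, hF]
          field_simp
      _ ≤ 1 / m * ∑ i, ⟪b - y i (τ i), b - xstar⟫ := by
          gcongr with i
          simpa only [hη i] using
            (hy i).mul_le_inner_start_sub_end (hconv i) (hdiff i) (hsmooth i) (hη0 i) (hητ i) xstar
  rw [average_sub_eq_sub_average hm b xstar]
  exact le_mul_norm_sq_sub_norm_sub_sq hK hKs (sub_nonneg.2 (hmin b))
    (norm_gradient_sq_le_of_forall_le hFdiff hFsmooth hK hmin b) hnorm hinner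

/-- Theorem 4 (convex case with systems heterogeneity), first part: FedLin with
client-specific numbers of local steps `τᵢ ≥ 1` and step sizes `ηᵢ = 1/(10Lτᵢ)`
achieves an `O(1/T)` rate on the averaged iterate. -/
theorem fedlin_convergence_convex_systems_heterogeneity {d m : ℕ} (hm : 0 < m)
    (f : Fin m → EuclideanSpace ℝ (Fin d) → ℝ)
    (F : EuclideanSpace ℝ (Fin d) → ℝ)
    (hF : ∀ z, F z = (1 / (m : ℝ)) * ∑ i, f i z)
    (L : ℝ) (hL : 0 < L)
    (hdiff : ∀ i, Differentiable ℝ (f i))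
    (hsmooth : ∀ i, LipschitzWith L.toNNReal (gradient (f i)))
    (hconv : ∀ i, ConvexOn ℝ Set.univ (f i))
    (τ : Fin m → ℕ) (hτ : ∀ i, 1 ≤ τ i)
    (η : Fin m → ℝ) (hη : ∀ i, η i = 1 / (10 * L * (τ i : ℝ)))
    (xbar : ℕ → EuclideanSpace ℝ (Fin d))
    (x : ℕ → Fin m → ℕ → EuclideanSpace ℝ (Fin d))
    (hx0 : ∀ t, 1 ≤ t → ∀ i, x t i 0 = xbar t)
    (hrec : ∀ t, 1 ≤ t → ∀ i, ∀ ℓ < τ i, x t i (ℓ + 1) =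
      x t i ℓ - η i • (gradient (f i) (x t i ℓ) - gradient (f i) (xbar t)
        + gradient F (xbar t)))
    (havg : ∀ t, 1 ≤ t → xbar (t + 1) = (1 / (m : ℝ)) • ∑ i, x t i (τ i))
    (xstar : EuclideanSpace ℝ (Fin d)) (hmin : ∀ z, F xstar ≤ F z)
    (T : ℕ) (hT : 1 ≤ T) :
    F ((1 / (T : ℝ)) • ∑ t ∈ Finset.Icc 1 T, xbar t) - F xstar ≤
      (10 * L / (T : ℝ)) * (‖xbar 1 - xstar‖ ^ 2 - ‖xbar (T + 1) - xstar‖ ^ 2) := by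
  have hLK : (L.toNNReal : ℝ) = L := Real.coe_toNNReal L hL.le
  have hητ : ∀ i, η i * τ i = 1 / (10 * (L.toNNReal : ℝ)) := fun i => by
    have : (τ i : ℝ) ≠ 0 := Nat.cast_ne_zero.2 (Nat.one_le_iff_ne_zero.1 (hτ i))
    rw [hη i, hLK]
    field_simp
  have hFconv : ConvexOn ℝ Set.univ F :=
    funext hF ▸ convexOn_const_mul_sum univ (by positivity) (fun i _ => hconv i) convex_univ
  refine hFconv.average_sub_le_of_descent (a := fun t => ‖xbar t - xstar‖ ^ 2) hT fun t ht => ?_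
  have ht1 := (mem_Icc.1 ht).1
  rw [havg t ht1, ← hLK]
  exact fedlin_round_descent hm hF (Real.toNNReal_pos.2 hL) hdiff hsmooth hconv hητ hmin
    fun i => ⟨hx0 t ht1 i, hrec t ht1 i⟩
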